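/- arXiv:2407.16135 — 2 statements merged into one kernel-verified Lean document; each statement's English description precedes it below -/
import Mathlib

section
/- Let V be a finite set of n vertices, q a positive integer, and c : V → Fin q a classification of the vertices, with n_k denoting the number of vertices of class k. Let M be a symmetric q × q matrix of natural numbers such that M_{k,l} ≤ n_k · n_l for all k ≠ l and M_{k,k} ≤ n_k · (n_k − 1) / 2 for all k. Then there exists a simple graph G on V whose classification mixing matrix equals M, i.e., for every pair of classes k ≤ l, the number of edges of G with one endpoint of class k and the other of class l equals M_{k,l}. -/
/-!
Any demand `m p ≤ #(pairs of distinct vertices whose classes form the unordered pair p)` can be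
met by choosing, independently for every unordered pair of classes `p`, exactly `m p` of those
vertex pairs as edges: the fibres of `Sym2.map c` are disjoint, so the choices do not interact.
The hypotheses on `M` say precisely that each entry is at most the size of its fibre,
`n_k * n_l` for `k ≠ l` and `n_k.choose 2` on the diagonal.
-/

/-- The number of vertices of class `k` under classification `c`. -/
noncomputable def classSize {V : Type*} [Fintype V] {q : ℕ} (c : V → Fin q) (k : Fin q) : ℕ :=
  (Finset.univ.filter (fun v => c v = k)).card

/-- The `(k,l)` entry of the classification mixing matrix of a simple graph `G`:
the number of edges of `G` whose two endpoints have classes `k` and `l`. -/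
noncomputable def mixingMatrix {V : Type*} [Fintype V] {q : ℕ}
    (c : V → Fin q) (G : SimpleGraph V) (k l : Fin q) : ℕ :=
  {e ∈ G.edgeSet | Sym2.map c e = s(k, l)}.ncard

open Finset

namespace SimpleGraph

theorem exists_ncard_edgeSet_sep_map_eq {V W : Type*} (f : V → W) (m : Sym2 W → ℕ)
    (hm : ∀ p, m p ≤ {e ∈ (⊤ : SimpleGraph V).edgeSet | Sym2.map f e = p}.ncard) :
    ∃ G : SimpleGraph V, ∀ p, {e ∈ G.edgeSet | Sym2.map f e = p}.ncard = m p := by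
  choose S hS hcard using fun p => Set.exists_subset_card_eq (hm p)
  refine ⟨fromEdgeSet {e | e ∈ S (Sym2.map f e)}, fun p => ?_⟩
  rw [← hcard p]
  congr 1
  ext e
  simp only [edgeSet_fromEdgeSet, Set.mem_ofPred_eq, Set.mem_sdiff, Sym2.mem_diagSet]
  constructor
  · rintro ⟨⟨he, -⟩, rfl⟩
    exact he
  · intro he
    obtain ⟨htop, rfl⟩ := hS p he
    exact ⟨⟨he, not_isDiag_of_mem_edgeSet _ htop⟩, rfl⟩

section ClassPairs

variable {V W : Type*} [Fintype V] [DecidableEq V] [DecidableEq W] (c : V → W)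

lemma edgeSet_top_sep_map_eq_mk_self (k : W) :
    {e ∈ (⊤ : SimpleGraph V).edgeSet | Sym2.map c e = s(k, k)} =
      (({v | c v = k} : Finset V).offDiag.image Sym2.mk.uncurry : Set (Sym2 V)) := by
  ext ⟨x, y⟩
  aesop

lemma edgeSet_top_sep_map_eq_mk_of_ne {k l : W} (hkl : k ≠ l) :
    {e ∈ (⊤ : SimpleGraph V).edgeSet | Sym2.map c e = s(k, l)} =
      (((({v | c v = k} : Finset V) ×ˢ ({v | c v = l} : Finset V)).image Sym2.mk.uncurry :
        Finset (Sym2 V)) : Set (Sym2 V)) := by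
  ext ⟨x, y⟩
  aesop

lemma ncard_edgeSet_top_sep_map_eq_mk_self (k : W) :
    {e ∈ (⊤ : SimpleGraph V).edgeSet | Sym2.map c e = s(k, k)}.ncard =
      (#{v | c v = k}).choose 2 := by
  rw [edgeSet_top_sep_map_eq_mk_self, Set.ncard_coe_finset, Sym2.card_image_offDiag]

lemma ncard_edgeSet_top_sep_map_eq_mk_of_ne {k l : W} (hkl : k ≠ l) :
    {e ∈ (⊤ : SimpleGraph V).edgeSet | Sym2.map c e = s(k, l)}.ncard =
      #{v | c v = k} * #{v | c v = l} := by
  rw [edgeSet_top_sep_map_eq_mk_of_ne c hkl, Set.ncard_coe_finset, card_image_of_injOn, card_product]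
  rintro ⟨a, b⟩ hab ⟨a', b'⟩ hab' h
  simp only [coe_product, coe_filter, mem_univ, true_and, Set.mem_prod, Set.mem_ofPred_eq]
    at hab hab'
  obtain ⟨rfl, rfl⟩ | ⟨rfl, rfl⟩ := Sym2.eq_iff.mp h
  · rfl
  · exact absurd (hab.1.symm.trans hab'.2) hkl

end ClassPairs

end SimpleGraph

open SimpleGraph in
theorem mixing_matrix_graphical_general {V : Type*} [Fintype V] {q : ℕ}
    (c : V → Fin q) (M : Matrix (Fin q) (Fin q) ℕ) (hsymm : M.IsSymm)
    (hoff : ∀ k l : Fin q, k ≠ l → M k l ≤ classSize c k * classSize c l)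
    (hdiag : ∀ k : Fin q, M k k ≤ classSize c k * (classSize c k - 1) / 2) :
    ∃ G : SimpleGraph V, ∀ k l : Fin q, k ≤ l → mixingMatrix c G k l = M k l := by
  classical
  let m : Sym2 (Fin q) → ℕ := Sym2.lift ⟨fun k l => M k l, fun k l => hsymm.apply l k⟩
  obtain ⟨G, hG⟩ := exists_ncard_edgeSet_sep_map_eq c m <| Sym2.ind fun k l => by
    rcases eq_or_ne k l with rfl | hkl
    · rw [ncard_edgeSet_top_sep_map_eq_mk_self, Nat.choose_two_right]
      exact hdiag k
    · rw [ncard_edgeSet_top_sep_map_eq_mk_of_ne c hkl]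
      exact hoff k l hkl
  exact ⟨G, fun k l _ => hG s(k, l)⟩

theorem mixing_matrix_graphical {V : Type*} [Fintype V] {q : ℕ} (hq : 0 < q)
    (c : V → Fin q) (M : Matrix (Fin q) (Fin q) ℕ) (hsymm : M.IsSymm)
    (hoff : ∀ k l : Fin q, k ≠ l → M k l ≤ classSize c k * classSize c l)
    (hdiag : ∀ k : Fin q, M k k ≤ classSize c k * (classSize c k - 1) / 2) :
    ∃ G : SimpleGraph V, ∀ k l : Fin q, k ≤ l → mixingMatrix c G k l = M k l :=
  mixing_matrix_graphical_general c M hsymm hoff hdiag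
end

section
/- Let V be a finite set of n vertices, q a positive integer, and c : V → Fin q a classification of the vertices, with n_k denoting the number of vertices of class k. A symmetric q × q matrix M of natural numbers is the classification mixing matrix of some simple graph on V if and only if M_{k,l} ≤ n_k · n_l for all k ≠ l and M_{k,k} ≤ n_k · (n_k − 1) / 2 for all k. -/
namespace MixAux

variable {V : Type*} [Fintype V] {q : ℕ}

open Finset

/-- The set of all potential edges with class pair `p`. -/
noncomputable def Sp (c : V → Fin q) (p : Sym2 (Fin q)) : Finset (Sym2 V) := by
  classical
  exact Finset.univ.filter (fun e => ¬e.IsDiag ∧ Sym2.map c e = p)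

lemma mem_Sp {c : V → Fin q} {p : Sym2 (Fin q)} {e : Sym2 V} :
    e ∈ Sp c p ↔ ¬e.IsDiag ∧ Sym2.map c e = p := by
  classical
  simp [Sp]

lemma card_Sp_ne (c : V → Fin q) {k l : Fin q} (h : k ≠ l) :
    (Sp c s(k, l)).card = classSize c k * classSize c l := by
  classical
  rw [classSize, classSize, ← Finset.card_product]
  symm
  apply Finset.card_bij (fun (uv : V × V) _ => s(uv.1, uv.2))
  · rintro ⟨u, v⟩ huv
    simp only [Finset.mem_product, Finset.mem_filter, Finset.mem_univ, true_and] at huv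
    rw [mem_Sp]
    constructor
    · simp only [Sym2.isDiag_iff_proj_eq]
      rintro rfl
      exact h (huv.1 ▸ huv.2 ▸ rfl)
    · simp [huv.1, huv.2]
  · rintro ⟨u₁, v₁⟩ h₁ ⟨u₂, v₂⟩ h₂ he
    simp only [Finset.mem_product, Finset.mem_filter, Finset.mem_univ, true_and] at h₁ h₂
    rw [Sym2.eq_iff] at he
    rcases he with ⟨rfl, rfl⟩ | ⟨rfl, rfl⟩
    · rfl
    · exact absurd (h₁.1 ▸ h₂.2 ▸ rfl) h
  · intro e he
    rw [mem_Sp] at he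
    induction e using Sym2.ind with
    | _ u v =>
      have hmap : s(c u, c v) = s(k, l) := by simpa using he.2
      rw [Sym2.eq_iff] at hmap
      rcases hmap with ⟨hu, hv⟩ | ⟨hu, hv⟩
      · exact ⟨(u, v), by simp [Finset.mem_product, hu, hv], rfl⟩
      · exact ⟨(v, u), by simp [Finset.mem_product, hu, hv], Sym2.eq_swap⟩

lemma card_Sp_diag (c : V → Fin q) (k : Fin q) :
    (Sp c s(k, k)).card = classSize c k * (classSize c k - 1) / 2 := by
  classical
  have hcard : Fintype.card {v : V // c v = k} = classSize c k := by
    rw [classSize]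
    simp [Fintype.card_subtype]
  rw [← Nat.choose_two_right, ← hcard,
    ← SimpleGraph.card_edgeFinset_top_eq_card_choose_two]
  symm
  apply Finset.card_bij (fun (e : Sym2 {v : V // c v = k}) _ => Sym2.map Subtype.val e)
  · intro e he
    induction e using Sym2.ind with
    | _ u v =>
      have hne : u ≠ v := by
        have := SimpleGraph.not_isDiag_of_mem_edgeSet _ (SimpleGraph.mem_edgeFinset.1 he)
        simpa using this
      rw [mem_Sp]
      constructor
      · simp only [Sym2.map_pair_eq, Sym2.isDiag_iff_proj_eq]
        exact fun hc => hne (Subtype.ext hc)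
      · simp [u.2, v.2]
  · intro e₁ h₁ e₂ h₂ he
    exact Sym2.map.injective Subtype.val_injective he
  · intro e he
    rw [mem_Sp] at he
    induction e using Sym2.ind with
    | _ u v =>
      have hmap : s(c u, c v) = s(k, k) := by simpa using he.2
      rw [Sym2.eq_iff] at hmap
      have hu : c u = k := by tauto
      have hv : c v = k := by tauto
      have hne : u ≠ v := by simpa using he.1
      refine ⟨s((⟨u, hu⟩ : {v : V // c v = k}), ⟨v, hv⟩), ?_, by simp⟩
      rw [SimpleGraph.mem_edgeFinset, SimpleGraph.mem_edgeSet]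
      simp only [SimpleGraph.top_adj, ne_eq, Subtype.mk.injEq]
      exact hne

lemma mixing_le (c : V → Fin q) (G : SimpleGraph V) (k l : Fin q) :
    mixingMatrix c G k l ≤ (Sp c s(k, l)).card := by
  classical
  rw [mixingMatrix, ← Set.ncard_coe_finset]
  apply Set.ncard_le_ncard _ (Finset.finite_toSet _)
  intro e he
  simp only [Set.mem_setOf_eq] at he
  rw [Finset.mem_coe, mem_Sp]
  exact ⟨SimpleGraph.not_isDiag_of_mem_edgeSet _ he.1, he.2⟩

end MixAux

theorem mixing_matrix_graphical_iff {V : Type*} [Fintype V] {q : ℕ} (hq : 0 < q)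
    (c : V → Fin q) (M : Matrix (Fin q) (Fin q) ℕ) (hsymm : M.IsSymm) :
    (∃ G : SimpleGraph V, ∀ k l : Fin q, mixingMatrix c G k l = M k l) ↔
      ((∀ k l : Fin q, k ≠ l → M k l ≤ classSize c k * classSize c l) ∧
       (∀ k : Fin q, M k k ≤ classSize c k * (classSize c k - 1) / 2)) := by
  classical
  constructor
  · rintro ⟨G, hG⟩
    constructor
    · intro k l hkl
      rw [← hG k l, ← MixAux.card_Sp_ne c hkl]
      exact MixAux.mixing_le c G k l
    · intro k
      rw [← hG k k, ← MixAux.card_Sp_diag c k]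
      exact MixAux.mixing_le c G k k
  · rintro ⟨h1, h2⟩
    -- symmetric lift of `M` to `Sym2 (Fin q)`
    set mVal : Sym2 (Fin q) → ℕ :=
      Sym2.lift ⟨fun k l => M k l, fun k l => hsymm.apply l k⟩ with hmVal
    have hle : ∀ p : Sym2 (Fin q), mVal p ≤ (MixAux.Sp c p).card := by
      intro p
      induction p using Sym2.ind with
      | _ k l =>
        by_cases hkl : k = l
        · subst hkl
          rw [MixAux.card_Sp_diag c k]
          simpa [hmVal] using h2 k
        · rw [MixAux.card_Sp_ne c hkl]
          simpa [hmVal] using h1 k l hkl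
    choose T hTsub hTcard using fun p => Finset.exists_subset_card_eq (hle p)
    set E : Set (Sym2 V) := ⋃ p, ↑(T p) with hE
    have hEnd : ∀ e ∈ E, ¬e.IsDiag := by
      intro e he
      rw [hE, Set.mem_iUnion] at he
      obtain ⟨p, hp⟩ := he
      exact (MixAux.mem_Sp.1 (hTsub p hp)).1
    refine ⟨SimpleGraph.fromEdgeSet E, ?_⟩
    intro k l
    have hedge : (SimpleGraph.fromEdgeSet E).edgeSet = E := by
      rw [SimpleGraph.edgeSet_fromEdgeSet]
      ext e
      simp only [Set.mem_diff, Set.mem_setOf_eq, and_iff_left_iff_imp]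
      exact hEnd e
    have hset : {e ∈ (SimpleGraph.fromEdgeSet E).edgeSet | Sym2.map c e = s(k, l)}
        = ↑(T s(k, l)) := by
      rw [hedge]
      ext e
      simp only [Set.mem_setOf_eq, Finset.mem_coe]
      constructor
      · rintro ⟨heE, hmap⟩
        rw [hE, Set.mem_iUnion] at heE
        obtain ⟨p, hp⟩ := heE
        have := (MixAux.mem_Sp.1 (hTsub p hp)).2
        have hps : p = s(k, l) := by rw [← this, hmap]
        rw [Finset.mem_coe] at hp
        exact hps ▸ hp
      · intro hp
        refine ⟨?_, (MixAux.mem_Sp.1 (hTsub _ hp)).2⟩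
        rw [hE, Set.mem_iUnion]
        exact ⟨s(k, l), hp⟩
    rw [mixingMatrix, hset, Set.ncard_coe_finset, hTcard]
    simp [hmVal]
end
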